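/- Let w = w₁…w_k be a finite string over the alphabet {x, y, z} such that the number of occurrences of x in w is strictly greater than the number of occurrences of y, and y occurs at least once. Then w, read as a circular string (indices taken modulo k), contains one of the following as a (cyclic) substring: y x x δ, or x zⁿ δ, or y zⁿ x δ, for some n ≥ 1 and some letter δ ∈ {x, y}; that is, there exist a starting position t and one of the listed patterns u such that the consecutive letters of w starting at position t (indices modulo k) coincide with u. -/

import Mathlib

/-- The three-letter alphabet `{x, y, z}`. -/
inductive Letter : Type
  | x : Letter
  | y : Letter
  | z : Letter
deriving DecidableEq

open Letter in
/-- Let `w = w₁…w_k` be a string over `{x, y, z}` (encoded as a `k`-periodic function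
on `ℕ`, so that indices are read modulo `k`) in which `x` occurs strictly more often
than `y`, and `y` occurs at least once. Then `w`, read as a circular string, contains
one of `y x x δ`, `x zⁿ δ`, `y zⁿ x δ` (`n ≥ 1`, `δ ∈ {x, y}`) as a substring. -/
theorem statement12 (k : ℕ) (w : ℕ → Letter) (hper : ∀ i, w (i + k) = w i)
    (hxy : ((Finset.range k).filter (fun i => w i = y)).card <
           ((Finset.range k).filter (fun i => w i = x)).card)
    (hy : 1 ≤ ((Finset.range k).filter (fun i => w i = y)).card) :
    ∃ (t : ℕ) (δ : Letter), (δ = x ∨ δ = y) ∧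
      ((w t = y ∧ w (t + 1) = x ∧ w (t + 2) = x ∧ w (t + 3) = δ) ∨
       (∃ n, 1 ≤ n ∧ w t = x ∧ (∀ i, 1 ≤ i → i ≤ n → w (t + i) = z) ∧
          w (t + n + 1) = δ) ∨
       (∃ n, 1 ≤ n ∧ w t = y ∧ (∀ i, 1 ≤ i → i ≤ n → w (t + i) = z) ∧
          w (t + n + 1) = x ∧ w (t + n + 2) = δ)) := by
  classical
  by_contra H
  obtain ⟨iy, hiyk, hiy⟩ : ∃ i, i < k ∧ w i = y := by
    obtain ⟨i, hi⟩ := Finset.card_pos.mp hy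
    simp only [Finset.mem_filter, Finset.mem_range] at hi
    exact ⟨i, hi.1, hi.2⟩
  have hk : 0 < k := lt_of_le_of_lt (Nat.zero_le _) hiyk
  have hper2 : ∀ i m, w (i + k * m) = w i := by
    intro i m
    induction m with
    | zero => simp
    | succ m ih =>
      have e : i + k * (m+1) = (i + k * m) + k := by ring
      rw [e, hper, ih]
  have hmod : ∀ i, w i = w (i % k) := by
    intro i
    conv_lhs => rw [← Nat.mod_add_div i k]
    exact hper2 _ _
  have hiymod : ∀ m, w (iy + k * m) = y := by
    intro m; rw [hper2, hiy]
  -- Step A: no `x` immediately followed by `z`.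
  have hA : ∀ t, w t = x → w (t+1) ≠ z := by
    intro t htx htz
    have hex : ∃ j, 2 ≤ j ∧ w (t + j) ≠ z := by
      have h1 := Nat.mod_add_div t k
      have h2 := Nat.mod_lt t hk
      have h3 : k * (t / k + 2) = k * (t / k) + 2*k := by ring
      refine ⟨iy + k * (t / k + 2) - t, by omega, ?_⟩
      · have harith : t + (iy + k * (t / k + 2) - t) = iy + k * (t / k + 2) := by
          omega
        rw [harith, hiymod]
        simp
    set j := Nat.find hex with hj
    obtain ⟨hj2, hjz⟩ := Nat.find_spec hex
    have hδxy : w (t + j) = x ∨ w (t + j) = y := by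
      cases h' : w (t + j) with
      | x => exact Or.inl rfl
      | y => exact Or.inr rfl
      | z => exact absurd h' hjz
    apply H
    refine ⟨t, w (t + j), hδxy, Or.inr (Or.inl ⟨j - 1, by omega, htx, ?_, ?_⟩)⟩
    · intro i hi1 hin
      rcases Nat.lt_or_ge i 2 with h | h
      · have hi : i = 1 := by omega
        rw [hi]; exact htz
      · have hm := Nat.find_min hex (m := i) (by omega)
        push_neg at hm
        exact hm h
    · have e : t + (j-1) + 1 = t + j := by omega
      rw [e]
  -- Backward search: find the start of the maximal run of `c`'s ending at `t` (shifted by 2k).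
  have hback : ∀ (c : Letter) (t : ℕ), w t = c → c ≠ Letter.y →
      ∃ s n, 1 ≤ n ∧ w s ≠ c ∧ (∀ i, 1 ≤ i → i ≤ n → w (s + i) = c) ∧ s + n = t + 2*k := by
    intro c t htc hcy
    have hex : ∃ j, 1 ≤ j ∧ j ≤ 2*k ∧ w (t + 2*k - j) ≠ c := by
      have h1 := Nat.mod_add_div t k
      have h2 := Nat.mod_lt t hk
      have h3 : k * (t / k + 1) = k * (t / k) + k := by ring
      refine ⟨t + 2*k - (iy + k * (t / k + 1)), by omega, by omega, ?_⟩
      · have harith : t + 2*k - (t + 2*k - (iy + k * (t / k + 1))) = iy + k * (t / k + 1) := by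
          omega
        rw [harith, hiymod]
        intro h; exact hcy h.symm
    set j := Nat.find hex with hj
    obtain ⟨hj1, hj2k, hjc⟩ := Nat.find_spec hex
    refine ⟨t + 2*k - j, j, hj1, hjc, ?_, by omega⟩
    intro i hi1 hin
    rcases Nat.lt_or_ge i j with h | h
    · have hm := Nat.find_min hex (m := j - i) (by omega)
      push_neg at hm
      have hval := hm (by omega) (by omega)
      have e : t + 2*k - j + i = t + 2*k - (j - i) := by omega
      rw [e]; exact hval
    · have hij : i = j := by omega
      have e : t + 2*k - j + i = t + k * 2 := by omega
      rw [e, hper2, htc]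
  -- Step B: no `z` immediately followed by `x`.
  have hB : ∀ t, w t = z → w (t+1) ≠ x := by
    intro t htz htx
    obtain ⟨s, n, hn1, hsne, hrun, hsn⟩ := hback z t htz (by simp)
    have hx1 : w (s + n + 1) = x := by
      have e : s + n + 1 = (t + 1) + k * 2 := by omega
      rw [e, hper2, htx]
    cases hs : w s with
    | x => exact H ⟨s, x, Or.inl rfl, Or.inr (Or.inl ⟨n, hn1, hs, hrun, hx1⟩)⟩
    | y =>
      have h2 : w (s + n + 2) ≠ z := by
        have := hA (s + n + 1) hx1
        have e : s + n + 1 + 1 = s + n + 2 := by omega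
        rwa [e] at this
      have hδxy : w (s + n + 2) = x ∨ w (s + n + 2) = y := by
        cases h' : w (s + n + 2) with
        | x => exact Or.inl rfl
        | y => exact Or.inr rfl
        | z => exact absurd h' h2
      exact H ⟨s, w (s + n + 2), hδxy, Or.inr (Or.inr ⟨n, hn1, hs, hrun, hx1, rfl⟩)⟩
    | z => exact hsne hs
  -- Step D: no two consecutive `x`'s.
  have hD : ∀ t, w t = x → w (t+1) ≠ x := by
    intro t htx htx1
    obtain ⟨s, n, hn1, hsne, hrun, hsn⟩ := hback x t htx (by simp)
    have h1 : w (s + 1) = x := hrun 1 le_rfl hn1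
    have hx1 : w (s + n + 1) = x := by
      have e : s + n + 1 = (t + 1) + k * 2 := by omega
      rw [e, hper2, htx1]
    have h2 : w (s + 2) = x := by
      rcases Nat.lt_or_ge n 2 with h | h
      · have e : s + 2 = s + n + 1 := by omega
        rw [e]; exact hx1
      · exact hrun 2 (by omega) h
    have hsy : w s = y := by
      cases hs : w s with
      | x => exact absurd hs hsne
      | y => rfl
      | z => exact absurd h1 (hB s hs)
    have h3 : w (s + 3) ≠ z := by
      have := hA (s + 2) h2
      have e : s + 2 + 1 = s + 3 := by omega
      rwa [e] at this
    have hδxy : w (s + 3) = x ∨ w (s + 3) = y := by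
      cases h' : w (s + 3) with
      | x => exact Or.inl rfl
      | y => exact Or.inr rfl
      | z => exact absurd h' h3
    exact H ⟨s, w (s + 3), hδxy, Or.inl ⟨hsy, h1, h2, rfl⟩⟩
  -- Every `x` is followed by `y`.
  have hxy' : ∀ t, w t = x → w (t+1) = y := by
    intro t h
    cases h1 : w (t+1) with
    | x => exact absurd h1 (hD t h)
    | y => rfl
    | z => exact absurd h1 (hA t h)
  -- Counting: `t ↦ (t+1) % k` injects x-positions into y-positions.
  have hle : ((Finset.range k).filter (fun i => w i = x)).card ≤
      ((Finset.range k).filter (fun i => w i = y)).card := by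
    apply Finset.card_le_card_of_injOn (fun t => (t+1) % k)
    · intro a ha
      simp only [Finset.mem_coe, Finset.mem_filter, Finset.mem_range] at ha ⊢
      refine ⟨Nat.mod_lt _ hk, ?_⟩
      rw [← hmod (a+1)]
      exact hxy' a ha.2
    · intro a ha b hb hab
      simp only [Finset.coe_filter, Set.mem_setOf_eq, Finset.mem_range] at ha hb
      simp only at hab
      rcases Nat.lt_or_ge (a+1) k with h1 | h1 <;>
        rcases Nat.lt_or_ge (b+1) k with h2 | h2
      · rw [Nat.mod_eq_of_lt h1, Nat.mod_eq_of_lt h2] at hab; omega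
      · have hb1 : b + 1 = k := by omega
        rw [Nat.mod_eq_of_lt h1, hb1, Nat.mod_self] at hab; omega
      · have ha1 : a + 1 = k := by omega
        rw [Nat.mod_eq_of_lt h2, ha1, Nat.mod_self] at hab; omega
      · omega
  omega
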